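/- For all weight modules V and W over Ū, the map c_{V,W} : V⊗W → W⊗V is Ū-linear, where V⊗W and W⊗V carry the Ū-module structures induced by the coproduct Δ. -/

import Mathlib

noncomputable section

open scoped TensorProduct

namespace Unrolled

/-- `q^z = exp(π √-1 z / r)`. -/
def qc (r : ℕ) (z : ℂ) : ℂ := Complex.exp (Real.pi * Complex.I * z / r)

/-- `{z} = q^z - q^{-z}`. -/
def qbrk (r : ℕ) (z : ℂ) : ℂ := qc r z - qc r (-z)

/-- `[z] = {z}/{1}`. -/
def qint (r : ℕ) (z : ℂ) : ℂ := qbrk r z / qbrk r 1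

/-- `{n}! = ∏_{i=1}^n {i}`. -/
def qbrkFact (r n : ℕ) : ℂ := ∏ i ∈ Finset.range n, qbrk r ((i : ℂ) + 1)

/-- `[n]! = ∏_{i=1}^n [i]`. -/
def qintFact (r n : ℕ) : ℂ := ∏ i ∈ Finset.range n, qint r ((i : ℂ) + 1)

/-- The data of five operators `K, K⁻¹, H, E, F` on a complex vector space. -/
structure Ops (V : Type) [AddCommGroup V] [Module ℂ V] where
  K : Module.End ℂ V
  Kinv : Module.End ℂ V
  H : Module.End ℂ V
  E : Module.End ℂ V
  F : Module.End ℂ V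

/-- A module over the restricted unrolled quantum group `Ū = Ū_q^H(sl₂(ℂ))`:
five operators satisfying the defining relations of `Ū`. -/
structure Rep (r : ℕ) (V : Type) [AddCommGroup V] [Module ℂ V] extends Ops V where
  rel_KKinv : K * Kinv = 1
  rel_KinvK : Kinv * K = 1
  rel_HK : H * K = K * H
  rel_HE : H * E - E * H = (2 : ℂ) • E
  rel_HF : H * F - F * H = (-2 : ℂ) • F
  rel_KE : K * E = qc r 2 • (E * K)
  rel_KF : K * F = qc r (-2) • (F * K)
  rel_EF : E * F - F * E = (qbrk r 1)⁻¹ • (K - Kinv)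
  rel_Er : E ^ r = 0
  rel_Fr : F ^ r = 0

variable {V W U : Type} [AddCommGroup V] [Module ℂ V] [AddCommGroup W] [Module ℂ W]
  [AddCommGroup U] [Module ℂ U]

/-- A `Ū`-submodule: a subspace invariant under the five operators. -/
def Ops.Invariant (A : Ops V) (p : Submodule ℂ V) : Prop :=
  (∀ v ∈ p, A.K v ∈ p) ∧ (∀ v ∈ p, A.Kinv v ∈ p) ∧ (∀ v ∈ p, A.H v ∈ p) ∧
    (∀ v ∈ p, A.E v ∈ p) ∧ (∀ v ∈ p, A.F v ∈ p)

/-- A simple `Ū`-module: nonzero, with no nonzero proper invariant subspace. -/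
def Ops.IsSimple (A : Ops V) : Prop :=
  (∃ v : V, v ≠ 0) ∧ ∀ p : Submodule ℂ V, A.Invariant p → p = ⊥ ∨ p = ⊤

/-- A weight module: finite dimensional, a direct sum of `H`-eigenspaces, on which `K`
acts by `q^μ` on the `H`-eigenspace of eigenvalue `μ`. -/
structure IsWeight (r : ℕ) {V : Type} [AddCommGroup V] [Module ℂ V] (A : Ops V) : Prop where
  finDim : FiniteDimensional ℂ V
  sup_eigenspaces : (⨆ μ : ℂ, Module.End.eigenspace A.H μ) = ⊤
  K_apply : ∀ (μ : ℂ), ∀ v ∈ Module.End.eigenspace A.H μ, A.K v = qc r μ • v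

/-- A `Ū`-linear map. -/
def IsEquivariant (A : Ops V) (B : Ops W) (f : V →ₗ[ℂ] W) : Prop :=
  (∀ v, f (A.K v) = B.K (f v)) ∧ (∀ v, f (A.Kinv v) = B.Kinv (f v)) ∧
    (∀ v, f (A.H v) = B.H (f v)) ∧ (∀ v, f (A.E v) = B.E (f v)) ∧
    (∀ v, f (A.F v) = B.F (f v))

/-- Isomorphism of `Ū`-modules. -/
def OpsIso (A : Ops V) (B : Ops W) : Prop :=
  ∃ e : V ≃ₗ[ℂ] W, IsEquivariant A B (e : V →ₗ[ℂ] W)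

/-- The weight `α + r - 1 - 2i` of the basis vector `v_i` of the Verma module `V_α`. -/
def wt (r : ℕ) (α : ℂ) (i : ℕ) : ℂ := α + r - 1 - 2 * i

/-- The coefficient `{i}{i-α}/{1}²` occurring in `E v_i`. -/
def cE (r : ℕ) (α : ℂ) (i : ℕ) : ℂ := qbrk r i * qbrk r ((i : ℂ) - α) / qbrk r 1 ^ 2

/-- The Verma module `V_α` of highest weight `α + r - 1`, realized on `Fin r → ℂ`
with basis `v_0, …, v_{r-1}`. -/
def vermaOps (r : ℕ) (α : ℂ) : Ops (Fin r → ℂ) where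
  K := (Matrix.diagonal fun i : Fin r => qc r (wt r α (i : ℕ))).mulVecLin
  Kinv := (Matrix.diagonal fun i : Fin r => qc r (-wt r α (i : ℕ))).mulVecLin
  H := (Matrix.diagonal fun i : Fin r => wt r α (i : ℕ)).mulVecLin
  E := (Matrix.of fun i j : Fin r =>
    if (j : ℕ) = (i : ℕ) + 1 then cE r α (j : ℕ) else 0).mulVecLin
  F := (Matrix.of fun i j : Fin r =>
    if (i : ℕ) = (j : ℕ) + 1 then (1 : ℂ) else 0).mulVecLin

/-- `α_{l,n} = (l-1)r + n + 1`, so that `S_n^{lr}` is a quotient of `V_{α_{l,n}}`. -/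
def aln (r : ℕ) (l : ℤ) (n : ℕ) : ℂ := ((l : ℂ) - 1) * r + n + 1

/-- The simple module `S_n^{lr}` of highest weight `lr + n` and dimension `n+1`,
realized on `Fin (n+1) → ℂ`. -/
def smodOps (r : ℕ) (l : ℤ) (n : ℕ) : Ops (Fin (n + 1) → ℂ) where
  K := (Matrix.diagonal fun i : Fin (n + 1) => qc r (wt r (aln r l n) (i : ℕ))).mulVecLin
  Kinv := (Matrix.diagonal fun i : Fin (n + 1) => qc r (-wt r (aln r l n) (i : ℕ))).mulVecLin
  H := (Matrix.diagonal fun i : Fin (n + 1) => wt r (aln r l n) (i : ℕ)).mulVecLin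
  E := (Matrix.of fun i j : Fin (n + 1) =>
    if (j : ℕ) = (i : ℕ) + 1 then cE r (aln r l n) (j : ℕ) else 0).mulVecLin
  F := (Matrix.of fun i j : Fin (n + 1) =>
    if (i : ℕ) = (j : ℕ) + 1 then (1 : ℂ) else 0).mulVecLin

/-- `α ∈ (ℂ∖ℤ) ∪ rℤ`. -/
def goodα (r : ℕ) (α : ℂ) : Prop := (¬∃ n : ℤ, α = (n : ℂ)) ∨ ∃ m : ℤ, α = (r : ℂ) * m

/-- The tensor product `Ū`-module structure induced by the coproduct `Δ`. -/
def tensorOps (A : Ops V) (B : Ops W) : Ops (V ⊗[ℂ] W) where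
  K := TensorProduct.map A.K B.K
  Kinv := TensorProduct.map A.Kinv B.Kinv
  H := TensorProduct.map A.H (LinearMap.id : W →ₗ[ℂ] W) +
    TensorProduct.map (LinearMap.id : V →ₗ[ℂ] V) B.H
  E := TensorProduct.map (LinearMap.id : V →ₗ[ℂ] V) B.E + TensorProduct.map A.E B.K
  F := TensorProduct.map A.F (LinearMap.id : W →ₗ[ℂ] W) + TensorProduct.map A.Kinv B.F

/-- The operator `Σ_{l=0}^{r-1} ({1}^{2l}/{l}!) q^{l(l-1)/2} E^l ⊗ F^l` on `V ⊗ W`. -/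
def braidSum (r : ℕ) (A : Ops V) (B : Ops W) : Module.End ℂ (V ⊗[ℂ] W) :=
  ∑ l ∈ Finset.range r,
    (qbrk r 1 ^ (2 * l) / qbrkFact r l * qc r ((l : ℂ) * ((l : ℂ) - 1) / 2)) •
      TensorProduct.map (A.E ^ l) (B.F ^ l)

/-- The defining property of the operator `q^{H⊗H/2}` on `V ⊗ W`: it multiplies
`v ⊗ w` by `q^{λμ/2}` for weight vectors `v, w` of weights `λ, μ`. -/
def IsqHH (r : ℕ) (A : Ops V) (B : Ops W) (Q : Module.End ℂ (V ⊗[ℂ] W)) : Prop :=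
  ∀ (lam mu : ℂ) (v : V) (w : W),
    v ∈ Module.End.eigenspace A.H lam → w ∈ Module.End.eigenspace B.H mu →
      Q (v ⊗ₜ[ℂ] w) = qc r (lam * mu / 2) • (v ⊗ₜ[ℂ] w)

/-- The braiding `c_{V,W} = τ ∘ q^{H⊗H/2} ∘ Σ_l ({1}^{2l}/{l}!) q^{l(l-1)/2} E^l ⊗ F^l`,
where `Q` is the operator `q^{H⊗H/2}`. -/
def braidMap (r : ℕ) (A : Ops V) (B : Ops W) (Q : Module.End ℂ (V ⊗[ℂ] W)) :
    V ⊗[ℂ] W →ₗ[ℂ] W ⊗[ℂ] V :=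
  (TensorProduct.comm ℂ V W).toLinearMap ∘ₗ Q ∘ₗ braidSum r A B


/-!
On a pure tensor `v ⊗ w` of weight vectors of weights `λ, μ` the braiding is explicit:
`c (v ⊗ w) = Σ_l b_l(λ, μ) F^l w ⊗ E^l v` with
`b_l(λ, μ) = {1}^{2l}/{l}! q^{l(l-1)/2} q^{(λ+2l)(μ-2l)/2}`, and such tensors span `V ⊗ W`.
Every summand has the same total weight `λ + μ`, which gives commutation with `K`, `K⁻¹`
and `H`. For `E` (and symmetrically `F`) one commutes `E` past `F^{l+1}`,
`E F^{l+1} w = F^{l+1} E w + ({l+1}{μ-l}/{1}²) F^l w`, and compares coefficients of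
`F^l w ⊗ E^{l+1} v`: they agree by a q-number identity between `b_l` and `b_{l+1}`, and the one
unmatched term contains `E^r v = 0`.
-/

open Module.End TensorProduct

lemma qc_add (r : ℕ) (x y : ℂ) : qc r x * qc r y = qc r (x + y) := by
  simp only [qc, ← Complex.exp_add]; ring_nf

lemma qc_zero (r : ℕ) : qc r 0 = 1 := by simp [qc]

lemma qbrk_natCast_ne_zero {r i : ℕ} (hi : 0 < i) (hir : i < r) : qbrk r i ≠ 0 := by
  rw [qbrk, sub_ne_zero, qc, qc, Ne, Complex.exp_eq_exp_iff_exists_int]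
  rintro ⟨n, hn⟩
  have hr : (r : ℂ) ≠ 0 := by exact_mod_cast (by omega : r ≠ 0)
  have hin : ((i : ℤ) : ℂ) = (n * r : ℤ) := by
    field_simp at hn
    push_cast
    linear_combination hn / 2
  have hin' : (i : ℤ) = n * r := by exact_mod_cast hin
  rcases le_or_gt n 0 with hn0 | hn0 <;> nlinarith

lemma qbrk_one_ne_zero {r : ℕ} (hr : 2 ≤ r) : qbrk r 1 ≠ 0 := by
  exact_mod_cast qbrk_natCast_ne_zero (r := r) (i := 1) one_pos hr

lemma qbrk_succ_ne_zero {r l : ℕ} (hl : l + 1 < r) : qbrk r (l + 1) ≠ 0 := by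
  exact_mod_cast qbrk_natCast_ne_zero (r := r) (i := l + 1) l.succ_pos hl

lemma qbrkFact_ne_zero {r l : ℕ} (h : l < r) : qbrkFact r l ≠ 0 :=
  Finset.prod_ne_zero_iff.2 fun i hi => qbrk_succ_ne_zero (by simp at hi; omega)

def braidSumCoeff (r l : ℕ) : ℂ :=
  qbrk r 1 ^ (2 * l) / qbrkFact r l * qc r ((l : ℂ) * ((l : ℂ) - 1) / 2)

def braidCoeff (r l : ℕ) (lam mu : ℂ) : ℂ :=
  braidSumCoeff r l * qc r ((lam + 2 * l) * (mu - 2 * l) / 2)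

lemma braidSumCoeff_succ {r l : ℕ} (hl : l + 1 < r) :
    braidSumCoeff r (l + 1) = braidSumCoeff r l * qbrk r 1 ^ 2 * qc r l / qbrk r (l + 1) := by
  have hf := qbrkFact_ne_zero (r := r) (l := l) (by omega)
  have hs := qbrk_succ_ne_zero hl
  rw [braidSumCoeff, braidSumCoeff, qbrkFact, Finset.prod_range_succ, ← qbrkFact,
    show ((l + 1 : ℕ) : ℂ) * ((l + 1 : ℕ) - 1) / 2 = l * (l - 1) / 2 + l by push_cast; ring,
    ← qc_add]
  field_simp
  ring

lemma braidCoeff_E {r l : ℕ} (hl : l + 1 < r) (lam mu : ℂ) :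
    qc r mu * braidCoeff r l (lam + 2) mu = braidCoeff r l lam mu +
      braidCoeff r (l + 1) lam mu * qc r (lam + 2 * (l + 1 : ℕ)) *
        (qbrk r (l + 1) * qbrk r (mu - l) / qbrk r 1 ^ 2) := by
  have h1 := qbrk_one_ne_zero (by omega : 2 ≤ r)
  have hs := qbrk_succ_ne_zero hl
  have key : qc r mu * qc r ((lam + 2 + 2 * l) * (mu - 2 * l) / 2) =
      qc r ((lam + 2 * l) * (mu - 2 * l) / 2) +
        qc r l * qc r ((lam + 2 * (l + 1 : ℕ)) * (mu - 2 * (l + 1 : ℕ)) / 2) *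
          qc r (lam + 2 * (l + 1 : ℕ)) * qbrk r (mu - l) := by
    simp only [qbrk, mul_sub, qc_add]
    push_cast
    ring_nf
  rw [braidCoeff, braidCoeff, braidCoeff, braidSumCoeff_succ hl]
  field_simp
  linear_combination (norm := ring_nf) braidSumCoeff r l * key

lemma braidCoeff_F {r l : ℕ} (hl : l + 1 < r) (lam mu : ℂ) :
    qc r (-lam) * braidCoeff r l lam (mu - 2) = braidCoeff r l lam mu -
      braidCoeff r (l + 1) lam mu * qc r (-(mu - 2 * (l + 1 : ℕ))) *
        (qbrk r (l + 1) * qbrk r (lam + l) / qbrk r 1 ^ 2) := by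
  have h1 := qbrk_one_ne_zero (by omega : 2 ≤ r)
  have hs := qbrk_succ_ne_zero hl
  have key : qc r (-lam) * qc r ((lam + 2 * l) * (mu - 2 - 2 * l) / 2) =
      qc r ((lam + 2 * l) * (mu - 2 * l) / 2) -
        qc r l * qc r ((lam + 2 * (l + 1 : ℕ)) * (mu - 2 * (l + 1 : ℕ)) / 2) *
          qc r (-(mu - 2 * (l + 1 : ℕ))) * qbrk r (lam + l) := by
    simp only [qbrk, mul_sub, qc_add]
    push_cast
    ring_nf
  rw [braidCoeff, braidCoeff, braidCoeff, braidSumCoeff_succ hl]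
  field_simp
  linear_combination (norm := ring_nf) braidSumCoeff r l * key

lemma braidCoeff_add_two_right (r l : ℕ) (lam mu : ℂ) :
    braidCoeff r l lam (mu + 2) = braidCoeff r l lam mu * qc r (lam + 2 * l) := by
  rw [braidCoeff, braidCoeff, mul_assoc, qc_add]; ring_nf

lemma braidCoeff_sub_two_left (r l : ℕ) (lam mu : ℂ) :
    braidCoeff r l (lam - 2) mu = braidCoeff r l lam mu * qc r (-(mu - 2 * l)) := by
  rw [braidCoeff, braidCoeff, mul_assoc, qc_add]; ring_nf

namespace Rep

variable {r : ℕ} (A : Rep r V) {t : ℂ} {v : V}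

lemma H_mul_Kinv : A.H * A.Kinv = A.Kinv * A.H :=
  calc A.H * A.Kinv = A.Kinv * (A.K * A.H) * A.Kinv := by
        rw [← mul_assoc, A.rel_KinvK, one_mul]
    _ = A.Kinv * A.H := by rw [← A.rel_HK, mul_assoc, mul_assoc, A.rel_KKinv, mul_one]

lemma Kinv_mem_eigenspace (hv : v ∈ eigenspace A.H t) : A.Kinv v ∈ eigenspace A.H t := by
  rw [mem_eigenspace_iff] at hv ⊢
  rw [← mul_apply, H_mul_Kinv, mul_apply, hv, map_smul]

lemma E_mem_eigenspace (hv : v ∈ eigenspace A.H t) : A.E v ∈ eigenspace A.H (t + 2) := by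
  rw [mem_eigenspace_iff] at hv ⊢
  have h := LinearMap.congr_fun A.rel_HE v
  simp only [LinearMap.sub_apply, mul_apply, LinearMap.smul_apply, hv, map_smul] at h
  rw [add_smul, ← h]; abel

lemma F_mem_eigenspace (hv : v ∈ eigenspace A.H t) : A.F v ∈ eigenspace A.H (t - 2) := by
  rw [mem_eigenspace_iff] at hv ⊢
  have h := LinearMap.congr_fun A.rel_HF v
  simp only [LinearMap.sub_apply, mul_apply, LinearMap.smul_apply, hv, map_smul] at h
  rw [sub_eq_iff_eq_add] at h
  rw [h, sub_smul, neg_smul]; abel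

lemma E_pow_mem_eigenspace (hv : v ∈ eigenspace A.H t) (l : ℕ) :
    (A.E ^ l) v ∈ eigenspace A.H (t + 2 * l) := by
  induction l with
  | zero => simpa using hv
  | succ l ih =>
    rw [pow_succ', mul_apply, Nat.cast_succ, mul_add_one, ← add_assoc]
    exact A.E_mem_eigenspace ih

lemma F_pow_mem_eigenspace (hv : v ∈ eigenspace A.H t) (l : ℕ) :
    (A.F ^ l) v ∈ eigenspace A.H (t - 2 * l) := by
  induction l with
  | zero => simpa using hv
  | succ l ih =>
    rw [pow_succ', mul_apply, Nat.cast_succ, mul_add_one, ← sub_sub]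
    exact A.F_mem_eigenspace ih

variable {A}

lemma Kinv_apply_of_mem_eigenspace (hA : IsWeight r A.toOps) (hv : v ∈ eigenspace A.H t) :
    A.Kinv v = qc r (-t) • v := by
  have hK := hA.K_apply t _ (A.Kinv_mem_eigenspace hv)
  rw [← mul_apply, A.rel_KKinv, one_apply] at hK
  conv_rhs => rw [hK]
  rw [smul_smul, qc_add, neg_add_cancel, qc_zero, one_smul]

lemma E_F_apply (hA : IsWeight r A.toOps) (hv : v ∈ eigenspace A.H t) :
    A.E (A.F v) = A.F (A.E v) + (qbrk r t / qbrk r 1) • v := by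
  have h := LinearMap.congr_fun A.rel_EF v
  simp only [LinearMap.sub_apply, mul_apply, LinearMap.smul_apply, hA.K_apply t v hv,
    Kinv_apply_of_mem_eigenspace hA hv, ← sub_smul, smul_smul] at h
  simp only [qbrk] at h ⊢
  rw [div_eq_inv_mul, ← h]; abel

lemma E_F_pow_succ_apply (hA : IsWeight r A.toOps) (h1 : qbrk r 1 ≠ 0) (l : ℕ)
    (hv : v ∈ eigenspace A.H t) :
    A.E ((A.F ^ (l + 1)) v) =
      (A.F ^ (l + 1)) (A.E v) +
        (qbrk r (l + 1) * qbrk r (t - l) / qbrk r 1 ^ 2) • (A.F ^ l) v := by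
  induction l generalizing t v with
  | zero =>
    simp only [zero_add, pow_one, pow_zero, one_apply, Nat.cast_zero, sub_zero]
    rw [show qbrk r 1 * qbrk r t / qbrk r 1 ^ 2 = qbrk r t / qbrk r 1 by field_simp]
    exact E_F_apply hA hv
  | succ l ih =>
    have hcoeff : qbrk r t / qbrk r 1 + qbrk r (l + 1) * qbrk r (t - 2 - l) / qbrk r 1 ^ 2 =
        qbrk r ((l + 1 : ℕ) + 1) * qbrk r (t - (l + 1 : ℕ)) / qbrk r 1 ^ 2 := by
      field_simp
      simp only [qbrk, mul_sub, sub_mul, qc_add]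
      push_cast
      ring_nf
    rw [pow_succ, mul_apply, ih (A.F_mem_eigenspace hv), E_F_apply hA hv, map_add, map_smul,
      ← mul_apply, ← pow_succ, ← mul_apply (A.F ^ l), ← pow_succ, add_assoc, ← add_smul,
      hcoeff]

lemma F_E_pow_succ_apply (hA : IsWeight r A.toOps) (h1 : qbrk r 1 ≠ 0) (l : ℕ)
    (hv : v ∈ eigenspace A.H t) :
    A.F ((A.E ^ (l + 1)) v) =
      (A.E ^ (l + 1)) (A.F v) -
        (qbrk r (l + 1) * qbrk r (t + l) / qbrk r 1 ^ 2) • (A.E ^ l) v := by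
  induction l generalizing t v with
  | zero =>
    simp only [zero_add, pow_one, pow_zero, one_apply, Nat.cast_zero, add_zero]
    rw [show qbrk r 1 * qbrk r t / qbrk r 1 ^ 2 = qbrk r t / qbrk r 1 by field_simp,
      E_F_apply hA hv, add_sub_cancel_right]
  | succ l ih =>
    have hcoeff : qbrk r t / qbrk r 1 + qbrk r (l + 1) * qbrk r (t + 2 + l) / qbrk r 1 ^ 2 =
        qbrk r ((l + 1 : ℕ) + 1) * qbrk r (t + (l + 1 : ℕ)) / qbrk r 1 ^ 2 := by
      field_simp
      simp only [qbrk, mul_sub, sub_mul, qc_add]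
      push_cast
      ring_nf
    have hFE : A.F (A.E v) = A.E (A.F v) - (qbrk r t / qbrk r 1) • v := by
      rw [E_F_apply hA hv, add_sub_cancel_right]
    rw [pow_succ, mul_apply, ih (A.E_mem_eigenspace hv), hFE, map_sub, map_smul,
      ← mul_apply, ← pow_succ, ← mul_apply (A.E ^ l), ← pow_succ, sub_sub, ← add_smul,
      add_assoc, hcoeff]

end Rep

lemma IsWeight.induction_on {r : ℕ} {A : Ops V} (hA : IsWeight r A) {p : V → Prop} (v : V)
    (zero : p 0) (add : ∀ x y, p x → p y → p (x + y))
    (eigen : ∀ t, ∀ x ∈ eigenspace A.H t, p x) : p v :=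
  Submodule.iSup_induction _ (motive := p) (hA.sup_eigenspaces ▸ Submodule.mem_top) eigen zero add

lemma IsWeight.tensor_comm_of_eigenvectors {r : ℕ} {X : Type} [AddCommGroup X] [Module ℂ X]
    {A : Ops V} {B : Ops W} (hA : IsWeight r A) (hB : IsWeight r B) {f : V ⊗[ℂ] W →ₗ[ℂ] X}
    {S : Module.End ℂ (V ⊗[ℂ] W)} {T : Module.End ℂ X}
    (h : ∀ lam mu, ∀ v ∈ eigenspace A.H lam, ∀ w ∈ eigenspace B.H mu,
      f (S (v ⊗ₜ w)) = T (f (v ⊗ₜ w))) (x : V ⊗[ℂ] W) : f (S x) = T (f x) := by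
  induction x using TensorProduct.induction_on with
  | zero => simp
  | add x y hx hy => simp only [map_add, hx, hy]
  | tmul v w =>
    induction v using hA.induction_on with
    | zero => simp
    | add v v' hv hv' => simp only [add_tmul, map_add, hv, hv']
    | eigen lam v hv =>
      induction w using hB.induction_on with
      | zero => simp
      | add w w' hw hw' => simp only [tmul_add, map_add, hw, hw']
      | eigen mu w hw => exact h lam mu v hv w hw

variable {r : ℕ} {A : Rep r V} {B : Rep r W} {Q : Module.End ℂ (V ⊗[ℂ] W)}
  {lam mu : ℂ} {v : V} {w : W}

lemma braidMap_tmul (hQ : IsqHH r A.toOps B.toOps Q) (hv : v ∈ eigenspace A.H lam)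
    (hw : w ∈ eigenspace B.H mu) :
    braidMap r A.toOps B.toOps Q (v ⊗ₜ w) =
      ∑ l ∈ Finset.range r, braidCoeff r l lam mu • ((B.F ^ l) w ⊗ₜ (A.E ^ l) v) := by
  simp only [braidMap, braidSum, LinearMap.comp_apply, LinearMap.sum_apply, map_sum,
    LinearMap.smul_apply, map_tmul, map_smul,
    hQ _ _ _ _ (A.E_pow_mem_eigenspace hv _) (B.F_pow_mem_eigenspace hw _),
    LinearEquiv.coe_coe, comm_tmul, smul_smul, braidCoeff, braidSumCoeff]

lemma braidMap_comm_of_total_weight (φ : ℂ → ℂ) {S : Module.End ℂ (V ⊗[ℂ] W)}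
    {T : Module.End ℂ (W ⊗[ℂ] V)}
    (hS : ∀ {lam mu v w}, v ∈ eigenspace A.H lam → w ∈ eigenspace B.H mu →
      S (v ⊗ₜ w) = φ (lam + mu) • (v ⊗ₜ w))
    (hT : ∀ {mu lam w v}, w ∈ eigenspace B.H mu → v ∈ eigenspace A.H lam →
      T (w ⊗ₜ v) = φ (mu + lam) • (w ⊗ₜ v))
    (hQ : IsqHH r A.toOps B.toOps Q) (hv : v ∈ eigenspace A.H lam)
    (hw : w ∈ eigenspace B.H mu) :
    braidMap r A.toOps B.toOps Q (S (v ⊗ₜ w)) =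
      T (braidMap r A.toOps B.toOps Q (v ⊗ₜ w)) := by
  rw [hS hv hw, map_smul, braidMap_tmul hQ hv hw, map_sum, Finset.smul_sum]
  refine Finset.sum_congr rfl fun l _ => ?_
  rw [map_smul, hT (B.F_pow_mem_eigenspace hw l) (A.E_pow_mem_eigenspace hv l), smul_comm]
  ring_nf

lemma tensorOps_K_tmul (hA : IsWeight r A.toOps) (hB : IsWeight r B.toOps)
    (hv : v ∈ eigenspace A.H lam) (hw : w ∈ eigenspace B.H mu) :
    (tensorOps A.toOps B.toOps).K (v ⊗ₜ w) = qc r (lam + mu) • (v ⊗ₜ w) := by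
  rw [tensorOps, map_tmul, hA.K_apply _ _ hv, hB.K_apply _ _ hw, smul_tmul_smul, qc_add]

lemma tensorOps_Kinv_tmul (hA : IsWeight r A.toOps) (hB : IsWeight r B.toOps)
    (hv : v ∈ eigenspace A.H lam) (hw : w ∈ eigenspace B.H mu) :
    (tensorOps A.toOps B.toOps).Kinv (v ⊗ₜ w) = qc r (-(lam + mu)) • (v ⊗ₜ w) := by
  rw [tensorOps, map_tmul, Rep.Kinv_apply_of_mem_eigenspace hA hv,
    Rep.Kinv_apply_of_mem_eigenspace hB hw, smul_tmul_smul, qc_add, neg_add]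

lemma tensorOps_H_tmul (hv : v ∈ eigenspace A.H lam) (hw : w ∈ eigenspace B.H mu) :
    (tensorOps A.toOps B.toOps).H (v ⊗ₜ w) = (lam + mu) • (v ⊗ₜ w) := by
  rw [mem_eigenspace_iff] at hv hw
  simp only [tensorOps, LinearMap.add_apply, map_tmul, hv, hw, LinearMap.id_apply, smul_tmul',
    tmul_smul, add_smul]

lemma braidMap_tensorOps_E_tmul (hA : IsWeight r A.toOps) (hB : IsWeight r B.toOps)
    (hr : 2 ≤ r) (hQ : IsqHH r A.toOps B.toOps Q) (hv : v ∈ eigenspace A.H lam)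
    (hw : w ∈ eigenspace B.H mu) :
    braidMap r A.toOps B.toOps Q ((tensorOps A.toOps B.toOps).E (v ⊗ₜ w)) =
      (tensorOps B.toOps A.toOps).E (braidMap r A.toOps B.toOps Q (v ⊗ₜ w)) := by
  obtain ⟨n, rfl⟩ : ∃ n, r = n + 1 := ⟨r - 1, by omega⟩
  have hEn : (A.E ^ (n + 1)) v = 0 := by rw [A.rel_Er, LinearMap.zero_apply]
  have hE_pow : ∀ l, A.E ((A.E ^ l) v) = (A.E ^ (l + 1)) v := fun l => by
    rw [pow_succ', mul_apply]
  have hpow_E : ∀ l, (A.E ^ l) (A.E v) = (A.E ^ (l + 1)) v := fun l => by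
    rw [pow_succ, mul_apply]
  have hK : ∀ l : ℕ, A.K ((A.E ^ l) v) = qc (n + 1) (lam + 2 * l) • (A.E ^ l) v := fun l =>
    hA.K_apply _ _ (A.E_pow_mem_eigenspace hv l)
  have hEF : ∀ l : ℕ, B.E ((B.F ^ (l + 1)) w) = (B.F ^ (l + 1)) (B.E w) +
      (qbrk (n + 1) (l + 1) * qbrk (n + 1) (mu - l) / qbrk (n + 1) 1 ^ 2) • (B.F ^ l) w :=
    fun l => B.E_F_pow_succ_apply hB (qbrk_one_ne_zero hr) l hw
  have hcoeff := Finset.sum_congr rfl fun l (hl : l ∈ Finset.range n) =>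
    congrArg (· • ((B.F ^ l) w ⊗ₜ[ℂ] (A.E ^ (l + 1)) v))
      (braidCoeff_E (r := n + 1) (l := l) (by simpa using hl) lam mu)
  simp only [add_smul, Finset.sum_add_distrib, mul_assoc] at hcoeff
  simp only [tensorOps, LinearMap.add_apply, map_tmul, LinearMap.id_apply, hB.K_apply _ _ hw,
    tmul_smul, map_add, map_smul, braidMap_tmul hQ hv (B.E_mem_eigenspace hw),
    braidMap_tmul hQ (A.E_mem_eigenspace hv) hw, braidMap_tmul hQ hv hw, map_sum, hE_pow,
    hpow_E, hK, smul_add, Finset.sum_add_distrib]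
  -- split off the `l = 0` terms containing `E w` and the `l = n` terms containing `E^(n+1) v = 0`
  conv_lhs => rw [Finset.smul_sum, Finset.sum_range_succ', Finset.sum_range_succ]
  conv_rhs => rw [Finset.sum_range_succ, Finset.sum_range_succ']
  simp only [hEn, tmul_zero, smul_zero, add_zero, hEF, add_tmul, smul_add,
    Finset.sum_add_distrib, ← smul_tmul', smul_smul, braidCoeff_add_two_right, pow_zero,
    one_apply, Nat.cast_zero, mul_zero, hcoeff]
  abel

lemma braidMap_tensorOps_F_tmul (hA : IsWeight r A.toOps) (hB : IsWeight r B.toOps)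
    (hr : 2 ≤ r) (hQ : IsqHH r A.toOps B.toOps Q) (hv : v ∈ eigenspace A.H lam)
    (hw : w ∈ eigenspace B.H mu) :
    braidMap r A.toOps B.toOps Q ((tensorOps A.toOps B.toOps).F (v ⊗ₜ w)) =
      (tensorOps B.toOps A.toOps).F (braidMap r A.toOps B.toOps Q (v ⊗ₜ w)) := by
  obtain ⟨n, rfl⟩ : ∃ n, r = n + 1 := ⟨r - 1, by omega⟩
  have hFn : (B.F ^ (n + 1)) w = 0 := by rw [B.rel_Fr, LinearMap.zero_apply]
  have hF_pow : ∀ l, B.F ((B.F ^ l) w) = (B.F ^ (l + 1)) w := fun l => by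
    rw [pow_succ', mul_apply]
  have hpow_F : ∀ l, (B.F ^ l) (B.F w) = (B.F ^ (l + 1)) w := fun l => by
    rw [pow_succ, mul_apply]
  have hKinv : ∀ l : ℕ, B.Kinv ((B.F ^ l) w) = qc (n + 1) (-(mu - 2 * l)) • (B.F ^ l) w :=
    fun l => Rep.Kinv_apply_of_mem_eigenspace hB (B.F_pow_mem_eigenspace hw l)
  have hFE : ∀ l : ℕ, A.F ((A.E ^ (l + 1)) v) = (A.E ^ (l + 1)) (A.F v) -
      (qbrk (n + 1) (l + 1) * qbrk (n + 1) (lam + l) / qbrk (n + 1) 1 ^ 2) • (A.E ^ l) v :=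
    fun l => A.F_E_pow_succ_apply hA (qbrk_one_ne_zero hr) l hv
  have hcoeff := Finset.sum_congr rfl fun l (hl : l ∈ Finset.range n) =>
    congrArg (· • ((B.F ^ (l + 1)) w ⊗ₜ[ℂ] (A.E ^ l) v))
      (braidCoeff_F (r := n + 1) (l := l) (by simpa using hl) lam mu)
  simp only [sub_smul, Finset.sum_sub_distrib, mul_assoc] at hcoeff
  simp only [tensorOps, LinearMap.add_apply, map_tmul, LinearMap.id_apply,
    Rep.Kinv_apply_of_mem_eigenspace hA hv, ← smul_tmul', map_add, map_smul,
    braidMap_tmul hQ (A.F_mem_eigenspace hv) hw, braidMap_tmul hQ hv (B.F_mem_eigenspace hw),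
    braidMap_tmul hQ hv hw, map_sum, hF_pow, hpow_F, hKinv, smul_add, Finset.sum_add_distrib]
  -- split off the `l = 0` terms containing `F v` and the `l = n` terms containing `F^(n+1) w = 0`
  conv_lhs => rw [Finset.sum_range_succ', Finset.smul_sum, Finset.sum_range_succ]
  conv_rhs => rw [Finset.sum_range_succ, Finset.sum_range_succ']
  simp only [hFn, zero_tmul, smul_zero, add_zero, hFE, tmul_sub, smul_sub,
    Finset.sum_sub_distrib, tmul_smul, smul_smul, braidCoeff_sub_two_left, pow_zero, one_apply,
    Nat.cast_zero, mul_zero, sub_zero, hcoeff]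
  abel

/-- The braiding `c_{V,W}` is `Ū`-linear for all weight modules `V`, `W`. -/
theorem stmt8 (r : ℕ) (hr : 2 ≤ r) (ρV : Rep r V) (ρW : Rep r W)
    (hV : IsWeight r ρV.toOps) (hW : IsWeight r ρW.toOps)
    (Q : Module.End ℂ (V ⊗[ℂ] W)) (hQ : IsqHH r ρV.toOps ρW.toOps Q) :
    IsEquivariant (tensorOps ρV.toOps ρW.toOps) (tensorOps ρW.toOps ρV.toOps)
      (braidMap r ρV.toOps ρW.toOps Q) := by
  refine ⟨?_, ?_, ?_, ?_, ?_⟩ <;>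
    refine hV.tensor_comm_of_eigenvectors hW fun lam mu v hv w hw => ?_
  · exact braidMap_comm_of_total_weight (qc r) (tensorOps_K_tmul hV hW)
      (tensorOps_K_tmul hW hV) hQ hv hw
  · exact braidMap_comm_of_total_weight (fun t => qc r (-t)) (tensorOps_Kinv_tmul hV hW)
      (tensorOps_Kinv_tmul hW hV) hQ hv hw
  · exact braidMap_comm_of_total_weight (fun t => t) tensorOps_H_tmul tensorOps_H_tmul hQ hv hw
  · exact braidMap_tensorOps_E_tmul hV hW hr hQ hv hw
  · exact braidMap_tensorOps_F_tmul hV hW hr hQ hv hw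

end Unrolled
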